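/- Let d, n ≥ 1 and let Γ, Γ̂ : ℤ → (d×d real matrices) both satisfy the symmetry condition Γ(−h) = Γ(h)ᵀ and Γ̂(−h) = Γ̂(h)ᵀ. Let M and M̂ be the corresponding dn×dn block Toeplitz matrices with (s,t) blocks Γ(t−s) and Γ̂(t−s) respectively. Then ‖M̂ − M‖_op ≤ Σ_{h=−(n−1)}^{n−1} |Γ̂(h) − Γ(h)|₁, where ‖·‖_op is the spectral operator norm and |·|₁ the entrywise ℓ¹ norm. -/

import Mathlib

/-!
Schur test: if every row and every column of `A` has absolute sum at most `S`, weighted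
Cauchy–Schwarz gives `((A x)_p)² ≤ (∑_q |A_pq|) (∑_q |A_pq| x_q²)`, and summing over `p` bounds
`‖A x‖²` by `S²‖x‖²`. The difference of the two block Toeplitz matrices is the block Toeplitz
matrix of the lag errors `Γ̂ h - Γ h`, and along any block row or block column the lags `t - s`
are distinct and lie in `[-(n-1), n-1]`, so each row and column sum is at most
`∑_h |Γ̂ h - Γ h|₁`.
-/

open Matrix Finset

/-- The `ℓ² → ℓ²` (spectral) operator norm of a real square matrix. -/
noncomputable def l2OpNorm {m : Type*} [Fintype m] [DecidableEq m]
    (A : Matrix m m ℝ) : ℝ :=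
  ‖(Matrix.toEuclideanCLM (𝕜 := ℝ) (n := m) A :
      EuclideanSpace ℝ m →L[ℝ] EuclideanSpace ℝ m)‖

/-- The entrywise `ℓ¹` norm `|B|₁ = ∑_{i,j} |B i j|` of a real matrix. -/
noncomputable def entryL1 {d : ℕ} (B : Matrix (Fin d) (Fin d) ℝ) : ℝ :=
  ∑ i, ∑ j, |B i j|

/-- The `dn × dn` block Toeplitz matrix built from the `d × d` blocks `Γ h`, with the
block `Γ (t - s)` in block position `(s, t)`. -/
def blockToeplitz {d : ℕ} (Γ : ℤ → Matrix (Fin d) (Fin d) ℝ) (n : ℕ) :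
    Matrix (Fin n × Fin d) (Fin n × Fin d) ℝ :=
  fun p q => Γ ((q.1 : ℤ) - (p.1 : ℤ)) p.2 q.2

theorem sq_sum_mul_le_sum_abs_mul_sum_abs_mul_sq {ι : Type*} (s : Finset ι) (a x : ι → ℝ) :
    (∑ q ∈ s, a q * x q) ^ 2 ≤ (∑ q ∈ s, |a q|) * ∑ q ∈ s, |a q| * x q ^ 2 :=
  sum_sq_le_sum_mul_sum_of_sq_le_mul s (fun _ _ => abs_nonneg _)
    (fun _ _ => by positivity)
    fun q _ => le_of_eq (by rw [← mul_assoc, abs_mul_abs_self]; ring)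

theorem l2OpNorm_le_of_sum_abs_le {m : Type*} [Fintype m] [DecidableEq m] (A : Matrix m m ℝ)
    {S : ℝ} (hS : 0 ≤ S) (hrow : ∀ p, ∑ q, |A p q| ≤ S) (hcol : ∀ q, ∑ p, |A p q| ≤ S) :
    l2OpNorm A ≤ S := by
  refine ContinuousLinearMap.opNorm_le_bound _ hS fun x => ?_
  refine (sq_le_sq₀ (norm_nonneg _) (by positivity)).mp ?_
  simp only [EuclideanSpace.norm_sq_eq, ofLp_toEuclideanCLM, Real.norm_eq_abs, sq_abs]
  calc ∑ p, (A *ᵥ x) p ^ 2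
      ≤ ∑ p, (∑ q, |A p q|) * ∑ q, |A p q| * x q ^ 2 :=
        sum_le_sum fun p _ => sq_sum_mul_le_sum_abs_mul_sum_abs_mul_sq _ _ _
    _ ≤ ∑ p, S * ∑ q, |A p q| * x q ^ 2 :=
        sum_le_sum fun p _ => mul_le_mul_of_nonneg_right (hrow p) (by positivity)
    _ = S * ∑ q, (∑ p, |A p q|) * x q ^ 2 := by
        simp only [← mul_sum, sum_mul]
        rw [sum_comm]
    _ ≤ S * ∑ q, S * x q ^ 2 := by
        gcongr with q
        exact hcol q
    _ = (S * ‖x‖) ^ 2 := by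
        simp only [mul_pow, EuclideanSpace.norm_sq_eq, Real.norm_eq_abs, sq_abs, ← mul_sum]
        ring

theorem sum_comp_le_sum_of_injective {ι α M : Type*} [Fintype ι] [AddCommMonoid M]
    [PartialOrder M] [IsOrderedAddMonoid M] {s : Finset α} {F : α → M} (hF : ∀ a ∈ s, 0 ≤ F a)
    {φ : ι → α} (hφ : Function.Injective φ) (hmaps : ∀ i, φ i ∈ s) :
    ∑ i, F (φ i) ≤ ∑ a ∈ s, F a := by
  classical
  rw [← sum_image fun i _ j _ hij => hφ hij]
  exact sum_le_sum_of_subset_of_nonneg (by simpa [subset_iff] using hmaps)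
    fun a ha _ => hF a ha

theorem sub_mem_Icc_lags {n : ℕ} (s t : Fin n) :
    (t : ℤ) - s ∈ Icc (-((n : ℤ) - 1)) ((n : ℤ) - 1) := by
  rw [mem_Icc]
  omega

theorem sum_abs_row_le_entryL1 {d : ℕ} (B : Matrix (Fin d) (Fin d) ℝ) (i : Fin d) :
    ∑ j, |B i j| ≤ entryL1 B :=
  single_le_sum (f := fun i => ∑ j, |B i j|) (fun _ _ => by positivity) (mem_univ i)

theorem sum_abs_col_le_entryL1 {d : ℕ} (B : Matrix (Fin d) (Fin d) ℝ) (j : Fin d) :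
    ∑ i, |B i j| ≤ entryL1 B :=
  sum_le_sum fun i _ =>
    single_le_sum (f := fun j => |B i j|) (fun _ _ => abs_nonneg _) (mem_univ j)

theorem entryL1_nonneg {d : ℕ} (B : Matrix (Fin d) (Fin d) ℝ) : 0 ≤ entryL1 B := by
  unfold entryL1
  positivity

theorem blockToeplitz_sub {d : ℕ} (Γ Γ' : ℤ → Matrix (Fin d) (Fin d) ℝ) (n : ℕ) :
    blockToeplitz Γ n - blockToeplitz Γ' n = blockToeplitz (Γ - Γ') n :=
  rfl

section blockToeplitz

variable {d n : ℕ} (Γ : ℤ → Matrix (Fin d) (Fin d) ℝ)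

theorem blockToeplitz_row_sum_abs_le (p : Fin n × Fin d) :
    ∑ q, |blockToeplitz Γ n p q| ≤ ∑ h ∈ Icc (-((n : ℤ) - 1)) ((n : ℤ) - 1), entryL1 (Γ h) := by
  rw [Fintype.sum_prod_type]
  calc ∑ t : Fin n, ∑ j, |Γ ((t : ℤ) - p.1) p.2 j|
      ≤ ∑ h ∈ Icc (-((n : ℤ) - 1)) ((n : ℤ) - 1), ∑ j, |Γ h p.2 j| :=
        sum_comp_le_sum_of_injective (F := fun h => ∑ j, |Γ h p.2 j|)
          (fun _ _ => by positivity)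
          (fun t t' htt' => Fin.ext (by simpa using htt')) (sub_mem_Icc_lags p.1)
    _ ≤ _ := sum_le_sum fun h _ => sum_abs_row_le_entryL1 (Γ h) p.2

theorem blockToeplitz_col_sum_abs_le (q : Fin n × Fin d) :
    ∑ p, |blockToeplitz Γ n p q| ≤ ∑ h ∈ Icc (-((n : ℤ) - 1)) ((n : ℤ) - 1), entryL1 (Γ h) := by
  rw [Fintype.sum_prod_type]
  calc ∑ s : Fin n, ∑ i, |Γ ((q.1 : ℤ) - s) i q.2|
      ≤ ∑ h ∈ Icc (-((n : ℤ) - 1)) ((n : ℤ) - 1), ∑ i, |Γ h i q.2| :=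
        sum_comp_le_sum_of_injective (F := fun h => ∑ i, |Γ h i q.2|)
          (fun _ _ => by positivity)
          (fun s s' hss' => Fin.ext (by simpa using hss')) (sub_mem_Icc_lags · q.1)
    _ ≤ _ := sum_le_sum fun h _ => sum_abs_col_le_entryL1 (Γ h) q.2

end blockToeplitz

theorem blockToeplitz_diff_opNorm_le_general (d n : ℕ)
    (Γ Γhat : ℤ → Matrix (Fin d) (Fin d) ℝ) :
    l2OpNorm (blockToeplitz Γhat n - blockToeplitz Γ n) ≤
      ∑ h ∈ Finset.Icc (-((n : ℤ) - 1)) ((n : ℤ) - 1), entryL1 (Γhat h - Γ h) := by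
  rw [blockToeplitz_sub]
  exact l2OpNorm_le_of_sum_abs_le _ (sum_nonneg fun h _ => entryL1_nonneg _)
    (blockToeplitz_row_sum_abs_le _) (blockToeplitz_col_sum_abs_le _)

/-- The operator-norm error between two symmetric block Toeplitz matrices is controlled
by the sum over all lags of the entrywise `ℓ¹` errors of the corresponding blocks. -/
theorem blockToeplitz_diff_opNorm_le (d n : ℕ) (hd : 1 ≤ d) (hn : 1 ≤ n)
    (Γ Γhat : ℤ → Matrix (Fin d) (Fin d) ℝ)
    (hΓ : ∀ h : ℤ, Γ (-h) = (Γ h)ᵀ) (hΓhat : ∀ h : ℤ, Γhat (-h) = (Γhat h)ᵀ) :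
    l2OpNorm (blockToeplitz Γhat n - blockToeplitz Γ n) ≤
      ∑ h ∈ Finset.Icc (-((n : ℤ) - 1)) ((n : ℤ) - 1), entryL1 (Γhat h - Γ h) :=
  blockToeplitz_diff_opNorm_le_general d n Γ Γhat
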